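/- arXiv:1004.2581 — 2 statements merged into one kernel-verified Lean document; each statement's English description precedes it below -/
import Mathlib

section
/- If X and Y are i.i.d. with bounded density f, then the kernel h(x,y,t) = 1_{|x−y| ≤ t} (used for Rousseeuw and Croux's Qₙ scale estimator) satisfies the uniform variation condition on ℝ: E[ sup_{‖(x,y)−(X,Y)‖≤ε, ‖(x',y')−(X,Y)‖≤ε} |h(x,y,t) − h(x',y',t)| ] ≤ Lε for some constant L depending only on sup f, uniformly in t and ε > 0. -/
/-!
Moving `(X, Y)` by at most `ε` moves `|X - Y|` by at most `2ε`, so the indicator of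
`|x - y| ≤ t` is constant on the `ε`-ball around `(X, Y)` unless `|X - Y|` lies within `2ε`
of `t`. The integrand is therefore dominated by the indicator of that event, and by
independence and the density bound the event has probability at most `8Mε`.
-/

open MeasureTheory ProbabilityTheory Real Set
open scoped ENNReal

lemma abs_abs_sub_sub_abs_sub_le_two_mul {x y ε : ℝ} {q : ℝ × ℝ}
    (hq : √((q.1 - x) ^ 2 + (q.2 - y) ^ 2) ≤ ε) :
    |(|q.1 - q.2| - |x - y|)| ≤ 2 * ε := by
  have h₁ : |q.1 - x| ≤ ε := (abs_le_sqrt (by nlinarith [sq_nonneg (q.2 - y)])).trans hq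
  have h₂ : |q.2 - y| ≤ ε := (abs_le_sqrt (by nlinarith [sq_nonneg (q.1 - x)])).trans hq
  calc |(|q.1 - q.2| - |x - y|)| ≤ |(q.1 - q.2) - (x - y)| := abs_abs_sub_abs_le_abs_sub _ _
    _ = |(q.1 - x) - (q.2 - y)| := by ring_nf
    _ ≤ |q.1 - x| + |q.2 - y| := abs_sub _ _
    _ ≤ 2 * ε := by linarith

section Oscillation

variable {α : Type*} {S : Set α} {h : α → ℝ}

lemma biSup_biSup_abs_sub_nonneg : 0 ≤ ⨆ q ∈ S, ⨆ q' ∈ S, |h q - h q'| :=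
  Real.iSup_nonneg fun _ => Real.iSup_nonneg fun _ => Real.iSup_nonneg fun _ =>
    Real.iSup_nonneg fun _ => abs_nonneg _

lemma biSup_biSup_abs_sub_le {C : ℝ} (hC : 0 ≤ C) (hS : ∀ q ∈ S, ∀ q' ∈ S, |h q - h q'| ≤ C) :
    (⨆ q ∈ S, ⨆ q' ∈ S, |h q - h q'|) ≤ C :=
  Real.iSup_le (fun q => Real.iSup_le (fun hq => Real.iSup_le (fun q' =>
    Real.iSup_le (fun hq' => hS q hq q' hq') hC) hC) hC) hC

end Oscillation

lemma qn_oscillation_le_indicator (x y t ε : ℝ) :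
    (⨆ q ∈ {q : ℝ × ℝ | √((q.1 - x) ^ 2 + (q.2 - y) ^ 2) ≤ ε},
      ⨆ q' ∈ {q' : ℝ × ℝ | √((q'.1 - x) ^ 2 + (q'.2 - y) ^ 2) ≤ ε},
        |(if |q.1 - q.2| ≤ t then (1 : ℝ) else 0) - (if |q'.1 - q'.2| ≤ t then (1 : ℝ) else 0)|)
      ≤ (abs ⁻¹' Icc (t - 2 * ε) (t + 2 * ε)).indicator 1 (x - y) := by
  by_cases hxy : x - y ∈ abs ⁻¹' Icc (t - 2 * ε) (t + 2 * ε)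
  · rw [indicator_of_mem hxy, Pi.one_apply]
    refine biSup_biSup_abs_sub_le zero_le_one fun q _ q' _ => ?_
    split_ifs <;> norm_num
  · rw [indicator_of_notMem hxy]
    simp only [mem_preimage, mem_Icc, not_and_or, not_le] at hxy
    have hconst : ∀ q : ℝ × ℝ, √((q.1 - x) ^ 2 + (q.2 - y) ^ 2) ≤ ε →
        (if |q.1 - q.2| ≤ t then (1 : ℝ) else 0) = if |x - y| ≤ t then 1 else 0 := by
      intro q hq
      have hclose := abs_le.mp (abs_abs_sub_sub_abs_sub_le_two_mul hq)
      have hiff : |q.1 - q.2| ≤ t ↔ |x - y| ≤ t := by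
        constructor <;> intro <;> rcases hxy with hxy | hxy <;> linarith
      exact if_congr hiff rfl rfl
    refine biSup_biSup_abs_sub_le le_rfl fun q hq q' hq' => ?_
    rw [hconst q hq, hconst q' hq', sub_self, abs_zero]

lemma withDensity_ofReal_le_smul {β : Type*} [MeasurableSpace β] (μ : Measure β) {f : β → ℝ}
    {M : ℝ} (hfM : ∀ x, f x ≤ M) :
    μ.withDensity (fun x => ENNReal.ofReal (f x)) ≤ ENNReal.ofReal M • μ := by
  rw [← withDensity_const]
  exact withDensity_mono (ae_of_all _ fun x => ENNReal.ofReal_le_ofReal (hfM x))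

section Difference

variable {G : Type*} [MeasurableSpace G] [AddGroup G] [MeasurableAdd₂ G] [MeasurableNeg G]
  {ρ : Measure G} [ρ.IsAddLeftInvariant] [ρ.IsNegInvariant]

lemma prod_apply_sub_preimage_le {ν μ : Measure G} [IsProbabilityMeasure ν] [SFinite μ] {c : ℝ≥0∞}
    (hμ : μ ≤ c • ρ) {s : Set G} (hs : MeasurableSet s) :
    ν.prod μ ((fun p => p.1 - p.2) ⁻¹' s) ≤ c * ρ s := by
  have hsub : MeasurableSet ((fun p : G × G => p.1 - p.2) ⁻¹' s) :=
    measurable_fst.sub measurable_snd hs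
  rw [Measure.prod_apply hsub]
  calc ∫⁻ x, μ (Prod.mk x ⁻¹' ((fun p => p.1 - p.2) ⁻¹' s)) ∂ν
      ≤ ∫⁻ _, c * ρ s ∂ν := lintegral_mono fun x => by
        calc μ ((fun y => x - y) ⁻¹' s) ≤ c * ρ ((fun y => x - y) ⁻¹' s) := hμ _
          _ = c * ρ s := by
            rw [(Measure.measurePreserving_sub_left ρ x).measure_preimage hs.nullMeasurableSet]
    _ = c * ρ s := by simp

lemma measure_sub_mem_le_of_indepFun {Ω : Type*} [MeasurableSpace Ω] {P : Measure Ω}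
    [IsProbabilityMeasure P] {X Y : Ω → G} (hX : Measurable X) (hY : Measurable Y)
    (hXY : IndepFun X Y P) {c : ℝ≥0∞} (hlaw : P.map Y ≤ c • ρ) {s : Set G}
    (hs : MeasurableSet s) :
    P {ω | X ω - Y ω ∈ s} ≤ c * ρ s := by
  have : IsProbabilityMeasure (P.map X) := Measure.isProbabilityMeasure_map hX.aemeasurable
  have hsub : MeasurableSet ((fun p : G × G => p.1 - p.2) ⁻¹' s) :=
    measurable_fst.sub measurable_snd hs
  calc P {ω | X ω - Y ω ∈ s} = P.map (fun ω => (X ω, Y ω)) ((fun p => p.1 - p.2) ⁻¹' s) :=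
        (Measure.map_apply (hX.prodMk hY) hsub).symm
    _ = (P.map X).prod (P.map Y) ((fun p => p.1 - p.2) ⁻¹' s) := by
        rw [hXY.map_prod_eq_prod_map_map hX.aemeasurable hY.aemeasurable]
    _ ≤ c * ρ s := prod_apply_sub_preimage_le hlaw hs

end Difference

lemma volume_abs_preimage_Icc_le (a b : ℝ) :
    volume (abs ⁻¹' Icc a b) ≤ 2 * ENNReal.ofReal (b - a) := by
  have hsub : abs ⁻¹' Icc a b ⊆ Icc a b ∪ Icc (-b) (-a) := by
    intro z hz
    simp only [mem_preimage, mem_Icc] at hz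
    rcases abs_cases z with ⟨hz', _⟩ | ⟨hz', _⟩
    · exact Or.inl (by rw [mem_Icc]; constructor <;> linarith)
    · exact Or.inr (by rw [mem_Icc]; constructor <;> linarith)
  calc volume (abs ⁻¹' Icc a b) ≤ volume (Icc a b ∪ Icc (-b) (-a)) := measure_mono hsub
    _ ≤ volume (Icc a b) + volume (Icc (-b) (-a)) := measure_union_le _ _
    _ = 2 * ENNReal.ofReal (b - a) := by
        rw [Real.volume_Icc, Real.volume_Icc, neg_sub_neg, two_mul]

/-- For i.i.d. `X, Y` with density bounded by `M`, the kernel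
`h(x,y,t) = 1_{|x−y| ≤ t}` of the `Qₙ` scale estimator satisfies the uniform variation
condition on ℝ with a constant `L` depending only on `M`. -/
theorem qn_kernel_variation
    {Ω : Type*} [MeasureSpace Ω] [IsProbabilityMeasure (ℙ : Measure Ω)]
    (X Y : Ω → ℝ) (hXm : Measurable X) (hYm : Measurable Y)
    (hindep : ProbabilityTheory.IndepFun X Y ℙ)
    (f : ℝ → ℝ) (M : ℝ) (hf0 : ∀ x, 0 ≤ f x) (hfM : ∀ x, f x ≤ M)
    (hX : Measure.map X ℙ
      = (volume : Measure ℝ).withDensity (fun x => ENNReal.ofReal (f x)))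
    (hY : Measure.map Y ℙ = Measure.map X ℙ) :
    ∃ L : ℝ, 0 ≤ L ∧
      ∀ (t : ℝ), ∀ ε > (0 : ℝ),
        ∫ ω, (⨆ q ∈ {q : ℝ × ℝ | Real.sqrt ((q.1 - X ω) ^ 2 + (q.2 - Y ω) ^ 2) ≤ ε},
          ⨆ q' ∈ {q' : ℝ × ℝ | Real.sqrt ((q'.1 - X ω) ^ 2 + (q'.2 - Y ω) ^ 2) ≤ ε},
          |(if |q.1 - q.2| ≤ t then (1 : ℝ) else 0)
            - (if |q'.1 - q'.2| ≤ t then (1 : ℝ) else 0)|) ∂ℙ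
        ≤ L * ε := by
  have hM : 0 ≤ M := (hf0 0).trans (hfM 0)
  have hlawY : Measure.map Y ℙ ≤ ENNReal.ofReal M • volume := by
    rw [hY, hX]
    exact withDensity_ofReal_le_smul volume hfM
  refine ⟨8 * M, by positivity, fun t ε hε => ?_⟩
  set s := abs ⁻¹' Icc (t - 2 * ε) (t + 2 * ε)
  have hA : MeasurableSet {ω | X ω - Y ω ∈ s} := (hXm.sub hYm) (measurable_abs measurableSet_Icc)
  have hPA : ℙ {ω | X ω - Y ω ∈ s} ≤ ENNReal.ofReal (8 * M * ε) :=
    calc ℙ {ω | X ω - Y ω ∈ s} ≤ ENNReal.ofReal M * volume s :=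
          measure_sub_mem_le_of_indepFun hXm hYm hindep hlawY (measurable_abs measurableSet_Icc)
      _ ≤ ENNReal.ofReal M * (2 * ENNReal.ofReal (4 * ε)) := by
          rw [show 4 * ε = t + 2 * ε - (t - 2 * ε) by ring]
          gcongr
          exact volume_abs_preimage_Icc_le _ _
      _ = ENNReal.ofReal (8 * M * ε) := by
          rw [← ENNReal.ofReal_ofNat 2, ← ENNReal.ofReal_mul zero_le_two,
            ← ENNReal.ofReal_mul hM]
          congr 1
          ring
  calc _ ≤ ∫ ω, {ω | X ω - Y ω ∈ s}.indicator 1 ω ∂ℙ :=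
        integral_mono_of_nonneg (ae_of_all _ fun _ => biSup_biSup_abs_sub_nonneg)
          ((integrable_const 1).indicator hA)
          (ae_of_all _ fun ω => qn_oscillation_le_indicator (X ω) (Y ω) t ε)
    _ = (ℙ : Measure Ω).real {ω | X ω - Y ω ∈ s} := integral_indicator_one hA
    _ ≤ 8 * M * ε := ENNReal.toReal_le_of_le_ofReal (by positivity) hPA
end

section
/- Let Y₀, Y₁, … be stationary, bounded, centered random variables from a strongly mixing sequence with α(n) = O(n^{−β}), β > 3. Then for all i, j, k ≥ 1: |E[Y₀ Y_i Y_{i+j} Y_{i+j+k}]| ≤ C α^{1/β}(i) α^{1/β}(k) (E|Y₁|)^{(2β−2)/β} + C α^{3/β}(max{i,j,k}) (E|Y₁|)^{(β−3)/β}, for a constant C depending only on the uniform bound and β. -/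
/-!
Shift by stationarity so that the fourth moment becomes `E = 𝔼[Y₁ Y_{i+1} Y_{i+j+1} Y_{i+j+k+1}]`,
all of whose indices lie in the σ-algebras of `alphaMix`, and cut it at its largest gap. If that
gap is the first or the last one, `E` itself is a covariance across the gap, the isolated factor
being centred; if it is the middle one, `E - 𝔼[Y₁ Y_{i+1}] 𝔼[Y_{i+j+1} Y_{i+j+k+1}]` is, and the two
pair moments are covariances across the gaps `i` and `k`. Ibragimov's inequality bounds a
covariance of bounded variables across a gap `g` by `4 ‖U‖_∞ ‖V‖_∞ α(g)`; each of these quantities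
is also `O(𝔼|Y₁|)`, and `min a b ≤ a ^ θ * b ^ (1 - θ)`, with `θ = 3/β` for the covariance across
the largest gap and `θ = 1/β` for each pair moment, gives the two terms of the bound.
-/

open MeasureTheory ProbabilityTheory Real Filter Asymptotics

/-- The strong mixing (α-mixing) coefficients of a real-valued process. -/
noncomputable def alphaMix {Ω : Type*} [MeasureSpace Ω] (X : ℕ → Ω → ℝ) (k : ℕ) : ℝ :=
  sSup {r : ℝ | ∃ (n : ℕ) (A B : Set Ω),
    MeasurableSet[⨆ i ∈ Set.Icc 1 n, MeasurableSpace.comap (X i) inferInstance] A ∧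
    MeasurableSet[⨆ i ∈ Set.Ici (n + k), MeasurableSpace.comap (X i) inferInstance] B ∧
    r = |((ℙ : Measure Ω) (A ∩ B)).toReal
        - ((ℙ : Measure Ω) A).toReal * ((ℙ : Measure Ω) B).toReal|}

/-- Stationarity of a real-valued process: shift invariance of the law of the whole path. -/
def Stationary {Ω : Type*} [MeasureSpace Ω] (X : ℕ → Ω → ℝ) : Prop :=
  ∀ k : ℕ, Measure.map (fun ω (i : ℕ) => X (i + k) ω) (ℙ : Measure Ω)
    = Measure.map (fun ω (i : ℕ) => X i ω) (ℙ : Measure Ω)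

section CovarianceBound

variable {Ω : Type*} {m mΩ : MeasurableSpace Ω} {μ : Measure Ω}

lemma integral_mul_condExp_of_stronglyMeasurable_left (hm : m ≤ mΩ) [SigmaFinite (μ.trim hm)]
    {f g : Ω → ℝ} (hf : StronglyMeasurable[m] f) (hfg : Integrable (f * g) μ)
    (hg : Integrable g μ) :
    ∫ ω, f ω * μ[g|m] ω ∂μ = ∫ ω, f ω * g ω ∂μ :=
  (integral_congr_ae (condExp_mul_of_stronglyMeasurable_left hf hfg hg)).symm.trans
    (integral_condExp hm)

lemma integral_abs_eq_two_mul_setIntegral_sub {W : Ω → ℝ} (hW : Integrable W μ)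
    (hA : MeasurableSet {ω | 0 ≤ W ω}) :
    ∫ ω, |W ω| ∂μ = 2 * ∫ ω in {ω | 0 ≤ W ω}, W ω ∂μ - ∫ ω, W ω ∂μ := by
  have hpt : ∀ ω, |W ω| = 2 * {ω | 0 ≤ W ω}.indicator W ω - W ω := by
    intro ω
    by_cases h : 0 ≤ W ω
    · rw [Set.indicator_of_mem (show ω ∈ {ω | 0 ≤ W ω} from h), abs_of_nonneg h]
      ring
    · rw [Set.indicator_of_notMem (show ω ∉ {ω | 0 ≤ W ω} from h), abs_of_neg (not_le.mp h)]
      ring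
  simp_rw [hpt]
  rw [integral_sub ((hW.indicator hA).const_mul 2) hW, integral_const_mul, integral_indicator hA]

variable [IsProbabilityMeasure μ]

lemma covariance_eq_integral_mul_sub_integral {X Y : Ω → ℝ} (hX : MemLp X 2 μ)
    (hY : MemLp Y 2 μ) : cov[X, Y; μ] = ∫ ω, X ω * (Y ω - μ[Y]) ∂μ := by
  have hYc : MemLp (fun ω => Y ω - μ[Y]) 2 μ := hY.sub (memLp_const _)
  have hmean : ∫ ω, (Y ω - μ[Y]) ∂μ = 0 := by
    simp [integral_sub (hY.integrable one_le_two) (integrable_const _)]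
  have hXYc : Integrable (fun ω => X ω * (Y ω - μ[Y])) μ := hX.integrable_mul hYc
  simp_rw [covariance, sub_mul]
  rw [integral_sub hXYc ((hYc.integrable one_le_two).const_mul _),
    integral_const_mul, hmean, mul_zero, sub_zero]

lemma memLp_indicator_one {A : Set Ω} (hA : MeasurableSet A) (p : ENNReal) :
    MemLp (A.indicator (1 : Ω → ℝ)) p μ :=
  (memLp_const (1 : ℝ)).indicator hA

lemma covariance_indicator_one_left {A : Set Ω} (hA : MeasurableSet A) {V : Ω → ℝ}
    (hV : MemLp V 2 μ) : cov[A.indicator 1, V; μ] = ∫ ω in A, (V ω - μ[V]) ∂μ := by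
  rw [covariance_eq_integral_mul_sub_integral (memLp_indicator_one hA 2) hV,
    ← integral_indicator hA]
  congr 1 with ω
  by_cases hω : ω ∈ A <;> simp [hω]

lemma covariance_indicator_one_indicator_one {A B : Set Ω} (hA : MeasurableSet A)
    (hB : MeasurableSet B) :
    cov[A.indicator 1, B.indicator 1; μ] = μ.real (A ∩ B) - μ.real A * μ.real B := by
  rw [covariance_eq_sub (memLp_indicator_one hA 2) (memLp_indicator_one hB 2),
    ← Set.inter_indicator_one, integral_indicator_one (hA.inter hB), integral_indicator_one hA,
    integral_indicator_one hB]

lemma exists_abs_covariance_le_covariance_indicator (hm : m ≤ mΩ) {U V : Ω → ℝ} {KU : ℝ}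
    (hU : StronglyMeasurable[m] U) (hUb : ∀ᵐ ω ∂μ, |U ω| ≤ KU) (hV : MemLp V 2 μ) :
    ∃ A, MeasurableSet[m] A ∧ |cov[U, V; μ]| ≤ 2 * KU * cov[A.indicator 1, V; μ] := by
  set V₀ := fun ω => V ω - μ[V]
  have hV₀ : Integrable V₀ μ := (hV.integrable one_le_two).sub (integrable_const _)
  have hV₀_mean : ∫ ω, V₀ ω ∂μ = 0 := by
    simp [V₀, integral_sub (hV.integrable one_le_two) (integrable_const _)]
  set W := μ[V₀|m]
  have hW : StronglyMeasurable[m] W := stronglyMeasurable_condExp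
  set A := {ω | 0 ≤ W ω}
  have hA : MeasurableSet[m] A := measurableSet_le measurable_const hW.measurable
  refine ⟨A, hA, ?_⟩
  have hUb' : ∀ᵐ ω ∂μ, ‖U ω‖ ≤ KU := hUb
  have hUV₀ : Integrable (U * V₀) μ := hV₀.bdd_mul (hU.mono hm).aestronglyMeasurable hUb'
  have hUW : Integrable (fun ω => U ω * W ω) μ :=
    integrable_condExp.bdd_mul (hU.mono hm).aestronglyMeasurable hUb'
  -- `W` has mean zero, so `∫ |W| = 2 ∫_A W`, and `∫_A W = ∫_A V₀` since `A` is `m`-measurable.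
  calc |cov[U, V; μ]| = |∫ ω, U ω * W ω ∂μ| := by
        rw [covariance_eq_integral_mul_sub_integral
            (MemLp.of_bound (hU.mono hm).aestronglyMeasurable KU hUb') hV,
          integral_mul_condExp_of_stronglyMeasurable_left hm hU hUV₀ hV₀]
    _ ≤ ∫ ω, KU * |W ω| ∂μ := by
        refine abs_integral_le_integral_abs.trans (integral_mono_ae hUW.abs
          (integrable_condExp.abs.const_mul KU) (hUb.mono fun ω h => ?_))
        simp only [abs_mul]
        gcongr
    _ = KU * (2 * ∫ ω in A, V₀ ω ∂μ) := by
        rw [integral_const_mul,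
          integral_abs_eq_two_mul_setIntegral_sub integrable_condExp (hm _ hA),
          setIntegral_condExp hm hV₀ hA, integral_condExp hm, hV₀_mean, sub_zero]
    _ = 2 * KU * cov[A.indicator 1, V; μ] := by
        rw [covariance_indicator_one_left (hm _ hA) hV]
        ring

/-- Ibragimov's covariance inequality for bounded random variables. -/
theorem abs_covariance_le_of_abs_measureReal_inter_sub_le {mA mB : MeasurableSpace Ω}
    (hmA : mA ≤ mΩ) (hmB : mB ≤ mΩ) {α : ℝ}
    (hα : ∀ A B, MeasurableSet[mA] A → MeasurableSet[mB] B →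
      |μ.real (A ∩ B) - μ.real A * μ.real B| ≤ α)
    {U V : Ω → ℝ} {KU KV : ℝ} (hU : StronglyMeasurable[mA] U) (hV : StronglyMeasurable[mB] V)
    (hUb : ∀ᵐ ω ∂μ, |U ω| ≤ KU) (hVb : ∀ᵐ ω ∂μ, |V ω| ≤ KV) :
    |cov[U, V; μ]| ≤ 4 * KU * KV * α := by
  have hKU : 0 ≤ KU := hUb.exists.elim fun _ h => (abs_nonneg _).trans h
  have hKV : 0 ≤ KV := hVb.exists.elim fun _ h => (abs_nonneg _).trans h
  obtain ⟨A, hA, hUA⟩ := exists_abs_covariance_le_covariance_indicator hmA hU hUb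
    (MemLp.of_bound (hV.mono hmB).aestronglyMeasurable KV hVb)
  obtain ⟨B, hB, hVB⟩ := exists_abs_covariance_le_covariance_indicator hmB hV hVb
    (memLp_indicator_one (hmA _ hA) 2 (μ := μ))
  calc |cov[U, V; μ]| ≤ 2 * KU * |cov[V, A.indicator 1; μ]| := by
        rw [covariance_comm V]
        exact hUA.trans (by gcongr; exact le_abs_self _)
    _ ≤ 2 * KU * (2 * KV * (μ.real (A ∩ B) - μ.real A * μ.real B)) := by
        rw [Set.inter_comm, mul_comm (μ.real A),
          ← covariance_indicator_one_indicator_one (hmB _ hB) (hmA _ hA)]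
        gcongr
    _ ≤ 2 * KU * (2 * KV * α) := by
        gcongr
        exact (le_abs_self _).trans (hα A B hA hB)
    _ = 4 * KU * KV * α := by ring

end CovarianceBound

section StrongMixing

variable {Ω : Type*}

abbrev pastMeasurableSpace (X : ℕ → Ω → ℝ) (n : ℕ) : MeasurableSpace Ω :=
  ⨆ i ∈ Set.Icc 1 n, MeasurableSpace.comap (X i) inferInstance

abbrev futureMeasurableSpace (X : ℕ → Ω → ℝ) (n : ℕ) : MeasurableSpace Ω :=
  ⨆ i ∈ Set.Ici n, MeasurableSpace.comap (X i) inferInstance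

lemma measurable_pastMeasurableSpace (X : ℕ → Ω → ℝ) {a n : ℕ} (ha₁ : 1 ≤ a) (ha₂ : a ≤ n) :
    Measurable[pastMeasurableSpace X n] (X a) :=
  (comap_measurable (X a)).mono (le_biSup (fun i => MeasurableSpace.comap (X i) _) ⟨ha₁, ha₂⟩)
    le_rfl

lemma measurable_futureMeasurableSpace (X : ℕ → Ω → ℝ) {a n : ℕ} (ha : n ≤ a) :
    Measurable[futureMeasurableSpace X n] (X a) :=
  (comap_measurable (X a)).mono (le_biSup (fun i => MeasurableSpace.comap (X i) _)
    (Set.mem_Ici.mpr ha)) le_rfl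

variable [MeasureSpace Ω]

lemma pastMeasurableSpace_le {X : ℕ → Ω → ℝ} (hX : ∀ i, Measurable (X i)) (n : ℕ) :
    pastMeasurableSpace X n ≤ ‹MeasureSpace Ω›.toMeasurableSpace :=
  iSup₂_le fun i _ => (hX i).comap_le

lemma futureMeasurableSpace_le {X : ℕ → Ω → ℝ} (hX : ∀ i, Measurable (X i)) (n : ℕ) :
    futureMeasurableSpace X n ≤ ‹MeasureSpace Ω›.toMeasurableSpace :=
  iSup₂_le fun i _ => (hX i).comap_le

variable [IsProbabilityMeasure (ℙ : Measure Ω)]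

lemma abs_measureReal_inter_sub_le_alphaMix (X : ℕ → Ω → ℝ) {n k : ℕ} {A B : Set Ω}
    (hA : MeasurableSet[pastMeasurableSpace X n] A)
    (hB : MeasurableSet[futureMeasurableSpace X (n + k)] B) :
    |(ℙ : Measure Ω).real (A ∩ B) - (ℙ : Measure Ω).real A * (ℙ : Measure Ω).real B|
      ≤ alphaMix X k := by
  refine le_csSup ⟨1, ?_⟩ ⟨n, A, B, hA, hB, rfl⟩
  rintro r ⟨n, A, B, -, -, rfl⟩
  exact abs_sub_le_of_nonneg_of_le measureReal_nonneg measureReal_le_one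
    (mul_nonneg measureReal_nonneg measureReal_nonneg)
    (mul_le_one₀ measureReal_le_one measureReal_nonneg measureReal_le_one)

lemma alphaMix_nonneg (X : ℕ → Ω → ℝ) (k : ℕ) : 0 ≤ alphaMix X k :=
  (abs_nonneg _).trans (abs_measureReal_inter_sub_le_alphaMix X (n := 0)
    (@MeasurableSet.empty _ (pastMeasurableSpace X 0))
    (@MeasurableSet.empty _ (futureMeasurableSpace X (0 + k))))

theorem abs_integral_mul_sub_le_alphaMix {X : ℕ → Ω → ℝ} (hX : ∀ i, Measurable (X i))
    {n k : ℕ} {U V : Ω → ℝ} {KU KV : ℝ} (hU : Measurable[pastMeasurableSpace X n] U)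
    (hV : Measurable[futureMeasurableSpace X (n + k)] V)
    (hUb : ∀ ω, |U ω| ≤ KU) (hVb : ∀ ω, |V ω| ≤ KV) :
    |∫ ω, U ω * V ω ∂ℙ - (∫ ω, U ω ∂ℙ) * ∫ ω, V ω ∂ℙ| ≤ 4 * KU * KV * alphaMix X k := by
  have hUm := hU.mono (pastMeasurableSpace_le hX n) le_rfl
  have hVm := hV.mono (futureMeasurableSpace_le hX (n + k)) le_rfl
  have hcov := covariance_eq_sub (MemLp.of_bound hUm.aestronglyMeasurable KU (ae_of_all _ hUb))
    (MemLp.of_bound hVm.aestronglyMeasurable KV (ae_of_all _ hVb)) (μ := ℙ)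
  rw [Pi.mul_def] at hcov
  rw [← hcov]
  exact abs_covariance_le_of_abs_measureReal_inter_sub_le (pastMeasurableSpace_le hX n)
    (futureMeasurableSpace_le hX (n + k))
    (fun A B hA hB => abs_measureReal_inter_sub_le_alphaMix X hA hB)
    hU.stronglyMeasurable hV.stronglyMeasurable (ae_of_all _ hUb) (ae_of_all _ hVb)

end StrongMixing

lemma Stationary.integral_comp_shift {Ω : Type*} [MeasureSpace Ω] {Y : ℕ → Ω → ℝ}
    (hstat : Stationary Y) (hY : ∀ i, Measurable (Y i)) (s : ℕ) {F : (ℕ → ℝ) → ℝ}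
    (hF : Measurable F) :
    ∫ ω, F (fun l => Y (l + s) ω) ∂ℙ = ∫ ω, F (fun l => Y l ω) ∂ℙ := by
  rw [← integral_map (measurable_pi_lambda _ fun l => hY (l + s)).aemeasurable
      hF.aestronglyMeasurable,
    ← integral_map (measurable_pi_lambda _ fun l => hY l).aemeasurable hF.aestronglyMeasurable,
    hstat s]

lemma Stationary.integral_comp_eq {Ω : Type*} [MeasureSpace Ω] {Y : ℕ → Ω → ℝ}
    (hstat : Stationary Y) (hY : ∀ i, Measurable (Y i)) {g : ℝ → ℝ} (hg : Measurable g)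
    (m n : ℕ) : ∫ ω, g (Y m ω) ∂ℙ = ∫ ω, g (Y n ω) ∂ℙ := by
  have h := fun s => hstat.integral_comp_shift hY s (hg.comp (measurable_pi_apply 0))
  simp only [Function.comp_apply, zero_add] at h
  rw [h m, h n]

lemma Stationary.integral_fourProduct_eq_shift_one {Ω : Type*} [MeasureSpace Ω]
    {Y : ℕ → Ω → ℝ} (hstat : Stationary Y) (hY : ∀ i, Measurable (Y i)) (i j k : ℕ) :
    ∫ ω, Y 0 ω * Y i ω * Y (i + j) ω * Y (i + j + k) ω ∂ℙ
      = ∫ ω, Y 1 ω * Y (i + 1) ω * Y (i + j + 1) ω * Y (i + j + k + 1) ω ∂ℙ :=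
  (hstat.integral_comp_shift hY 1 (F := fun p => p 0 * p i * p (i + j) * p (i + j + k))
    (by fun_prop)).symm

lemma le_rpow_mul_rpow_of_le_of_le {x a b θ : ℝ} (hx : 0 ≤ x) (ha : x ≤ a) (hb : x ≤ b)
    (hθ₀ : 0 ≤ θ) (hθ₁ : θ ≤ 1) : x ≤ a ^ θ * b ^ (1 - θ) :=
  calc x = x ^ θ * x ^ (1 - θ) := by
        rw [← Real.rpow_add' hx (by norm_num), add_sub_cancel, Real.rpow_one]
    _ ≤ a ^ θ * b ^ (1 - θ) :=
      mul_le_mul (Real.rpow_le_rpow hx ha hθ₀) (Real.rpow_le_rpow hx hb (by linarith))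
        (by positivity) (Real.rpow_nonneg (hx.trans ha) θ)

lemma abs_le_mul_rpow_mul_rpow_of_le_of_le {x c₁ c₂ a b θ : ℝ} (hc₁ : 0 ≤ c₁) (hc₂ : 0 ≤ c₂)
    (ha : 0 ≤ a) (hb : 0 ≤ b) (h₁ : |x| ≤ c₁ * a) (h₂ : |x| ≤ c₂ * b) (hθ₀ : 0 ≤ θ)
    (hθ₁ : θ ≤ 1) : |x| ≤ c₁ ^ θ * c₂ ^ (1 - θ) * (a ^ θ * b ^ (1 - θ)) := by
  have h := le_rpow_mul_rpow_of_le_of_le (abs_nonneg x) h₁ h₂ hθ₀ hθ₁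
  rwa [Real.mul_rpow hc₁ ha, Real.mul_rpow hc₂ hb, mul_mul_mul_comm] at h

lemma abs_integral_mul_le_mul_integral_abs {Ω : Type*} {mΩ : MeasurableSpace Ω}
    {μ : Measure Ω} {f g : Ω → ℝ} {c : ℝ} (hf : Integrable f μ) (hg : AEStronglyMeasurable g μ)
    (hgc : ∀ᵐ ω ∂μ, |g ω| ≤ c) : |∫ ω, f ω * g ω ∂μ| ≤ c * ∫ ω, |f ω| ∂μ := by
  rw [← integral_const_mul]
  refine abs_integral_le_integral_abs.trans (integral_mono_ae ?_ (hf.abs.const_mul c)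
    (hgc.mono fun ω h => ?_))
  · exact (hf.mul_bdd hg hgc).abs
  · simp only [abs_mul, mul_comm c]
    exact mul_le_mul_of_nonneg_left h (abs_nonneg _)

lemma abs_mul_le_of_abs_le_of_abs_le {x y a b : ℝ} (hx : |x| ≤ a) (hy : |y| ≤ b) :
    |x * y| ≤ a * b := by
  rw [abs_mul]
  exact mul_le_mul hx hy (abs_nonneg y) ((abs_nonneg x).trans hx)

section BoundedCenteredProcess

variable {Ω : Type*} [MeasureSpace Ω] [IsProbabilityMeasure (ℙ : Measure Ω)]
  {Y : ℕ → Ω → ℝ} {K : ℝ}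

lemma nonneg_of_forall_abs_le (hbdd : ∀ n ω, |Y n ω| ≤ K) : 0 ≤ K :=
  (abs_nonneg _).trans (hbdd 0 (nonempty_of_isProbabilityMeasure ℙ).some)

lemma abs_integral_mul_le_mul_integral_abs_one (hmeas : ∀ i, Measurable (Y i))
    (hstat : Stationary Y) (hbdd : ∀ n ω, |Y n ω| ≤ K) (a b : ℕ) :
    |∫ ω, Y a ω * Y b ω ∂ℙ| ≤ K * ∫ ω, |Y 1 ω| ∂ℙ := by
  rw [hstat.integral_comp_eq hmeas measurable_abs 1 a]
  exact abs_integral_mul_le_mul_integral_abs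
    (Integrable.of_bound (hmeas a).aestronglyMeasurable K (ae_of_all _ (hbdd a)))
    (hmeas b).aestronglyMeasurable (ae_of_all _ (hbdd b))

lemma abs_integral_mul_le_rpow_alphaMix_mul (hmeas : ∀ i, Measurable (Y i))
    (hstat : Stationary Y) (hbdd : ∀ n ω, |Y n ω| ≤ K) (hcent : ∀ n, ∫ ω, Y n ω ∂ℙ = 0)
    {a : ℕ} (ha : 1 ≤ a) (d : ℕ) {θ : ℝ} (hθ₀ : 0 ≤ θ) (hθ₁ : θ ≤ 1) :
    |∫ ω, Y a ω * Y (a + d) ω ∂ℙ|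
      ≤ (4 * K ^ 2) ^ θ * K ^ (1 - θ) * (alphaMix Y d ^ θ * (∫ ω, |Y 1 ω| ∂ℙ) ^ (1 - θ)) := by
  have hK : 0 ≤ K := nonneg_of_forall_abs_le hbdd
  have hmix : |∫ ω, Y a ω * Y (a + d) ω ∂ℙ| ≤ 4 * K ^ 2 * alphaMix Y d := by
    have h := abs_integral_mul_sub_le_alphaMix hmeas
      (measurable_pastMeasurableSpace Y ha le_rfl) (measurable_futureMeasurableSpace Y le_rfl)
      (hbdd a) (hbdd (a + d))
    rwa [hcent a, zero_mul, sub_zero, mul_assoc 4, ← sq] at h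
  exact abs_le_mul_rpow_mul_rpow_of_le_of_le (by positivity) hK (alphaMix_nonneg Y d)
    (integral_nonneg fun _ => abs_nonneg _) hmix
    (abs_integral_mul_le_mul_integral_abs_one hmeas hstat hbdd a (a + d)) hθ₀ hθ₁

lemma abs_integral_fourProduct_le_mul_integral_abs_one (hmeas : ∀ i, Measurable (Y i))
    (hstat : Stationary Y) (hbdd : ∀ n ω, |Y n ω| ≤ K) (a b c d : ℕ) :
    |∫ ω, Y a ω * Y b ω * Y c ω * Y d ω ∂ℙ| ≤ K ^ 3 * ∫ ω, |Y 1 ω| ∂ℙ := by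
  simp_rw [mul_assoc]
  rw [hstat.integral_comp_eq hmeas measurable_abs 1 a, pow_succ', pow_two]
  exact abs_integral_mul_le_mul_integral_abs
    (Integrable.of_bound (hmeas a).aestronglyMeasurable K (ae_of_all _ (hbdd a)))
    ((hmeas b).mul ((hmeas c).mul (hmeas d))).aestronglyMeasurable (ae_of_all _ fun ω =>
      abs_mul_le_of_abs_le_of_abs_le (hbdd b ω)
        (abs_mul_le_of_abs_le_of_abs_le (hbdd c ω) (hbdd d ω)))

lemma abs_integral_fourProduct_le_alphaMix_left (hmeas : ∀ i, Measurable (Y i))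
    (hbdd : ∀ n ω, |Y n ω| ≤ K) (hcent : ∀ n, ∫ ω, Y n ω ∂ℙ = 0) (i j k : ℕ) :
    |∫ ω, Y 1 ω * Y (i + 1) ω * Y (i + j + 1) ω * Y (i + j + k + 1) ω ∂ℙ|
      ≤ 4 * K ^ 4 * alphaMix Y i := by
  have h := abs_integral_mul_sub_le_alphaMix hmeas (n := 1) (k := i)
    (measurable_pastMeasurableSpace Y le_rfl le_rfl)
    (((measurable_futureMeasurableSpace Y (by omega)).mul
      (measurable_futureMeasurableSpace Y (by omega))).mul
      (measurable_futureMeasurableSpace Y (by omega)))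
    (hbdd 1) (fun ω => abs_mul_le_of_abs_le_of_abs_le (abs_mul_le_of_abs_le_of_abs_le
      (hbdd (i + 1) ω) (hbdd (i + j + 1) ω)) (hbdd (i + j + k + 1) ω))
  rw [hcent 1, zero_mul, sub_zero] at h
  simp_rw [mul_assoc] at h ⊢
  exact h.trans_eq (by ring)

lemma abs_integral_fourProduct_le_alphaMix_right (hmeas : ∀ i, Measurable (Y i))
    (hbdd : ∀ n ω, |Y n ω| ≤ K) (hcent : ∀ n, ∫ ω, Y n ω ∂ℙ = 0) (i j k : ℕ) :
    |∫ ω, Y 1 ω * Y (i + 1) ω * Y (i + j + 1) ω * Y (i + j + k + 1) ω ∂ℙ|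
      ≤ 4 * K ^ 4 * alphaMix Y k := by
  have h := abs_integral_mul_sub_le_alphaMix hmeas (n := i + j + 1) (k := k)
    (((measurable_pastMeasurableSpace Y le_rfl (by omega)).mul
      (measurable_pastMeasurableSpace Y (by omega) (by omega))).mul
      (measurable_pastMeasurableSpace Y (by omega) le_rfl))
    (measurable_futureMeasurableSpace Y (by omega))
    (fun ω => abs_mul_le_of_abs_le_of_abs_le (abs_mul_le_of_abs_le_of_abs_le
      (hbdd 1 ω) (hbdd (i + 1) ω)) (hbdd (i + j + 1) ω)) (hbdd (i + j + k + 1))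
  rw [hcent (i + j + k + 1), mul_zero, sub_zero] at h
  exact h.trans_eq (by ring)

lemma abs_integral_fourProduct_sub_le_alphaMix_middle (hmeas : ∀ i, Measurable (Y i))
    (hbdd : ∀ n ω, |Y n ω| ≤ K) (i j k : ℕ) :
    |∫ ω, Y 1 ω * Y (i + 1) ω * Y (i + j + 1) ω * Y (i + j + k + 1) ω ∂ℙ
      - (∫ ω, Y 1 ω * Y (i + 1) ω ∂ℙ) * ∫ ω, Y (i + j + 1) ω * Y (i + j + k + 1) ω ∂ℙ|
      ≤ 4 * K ^ 4 * alphaMix Y j := by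
  have h := abs_integral_mul_sub_le_alphaMix hmeas (n := i + 1) (k := j)
    ((measurable_pastMeasurableSpace Y le_rfl (by omega)).mul
      (measurable_pastMeasurableSpace Y (by omega) le_rfl))
    ((measurable_futureMeasurableSpace Y (by omega)).mul
      (measurable_futureMeasurableSpace Y (by omega)))
    (fun ω => abs_mul_le_of_abs_le_of_abs_le (hbdd 1 ω) (hbdd (i + 1) ω))
    (fun ω => abs_mul_le_of_abs_le_of_abs_le (hbdd (i + j + 1) ω) (hbdd (i + j + k + 1) ω))
  simp only [Pi.mul_apply, ← mul_assoc] at h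
  exact h.trans_eq (by ring)

lemma abs_integral_mul_mul_integral_mul_le (hmeas : ∀ i, Measurable (Y i))
    (hstat : Stationary Y) (hbdd : ∀ n ω, |Y n ω| ≤ K) (hcent : ∀ n, ∫ ω, Y n ω ∂ℙ = 0)
    {θ : ℝ} (hθ₀ : 0 ≤ θ) (hθ₁ : θ ≤ 1) (i j k : ℕ) :
    |(∫ ω, Y 1 ω * Y (i + 1) ω ∂ℙ) * ∫ ω, Y (i + j + 1) ω * Y (i + j + k + 1) ω ∂ℙ|
      ≤ ((4 * K ^ 2) ^ θ * K ^ (1 - θ)) ^ 2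
        * (alphaMix Y i ^ θ * alphaMix Y k ^ θ * (∫ ω, |Y 1 ω| ∂ℙ) ^ (2 * (1 - θ))) := by
  have h₁ := abs_integral_mul_le_rpow_alphaMix_mul hmeas hstat hbdd hcent le_rfl i hθ₀ hθ₁
  have h₂ := abs_integral_mul_le_rpow_alphaMix_mul hmeas hstat hbdd hcent
    (a := i + j + 1) (by omega) k hθ₀ hθ₁
  rw [add_comm 1 i] at h₁
  rw [show i + j + 1 + k = i + j + k + 1 by omega] at h₂
  refine (abs_mul_le_of_abs_le_of_abs_le h₁ h₂).trans_eq ?_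
  rw [mul_comm 2, Real.rpow_mul (integral_nonneg fun _ => abs_nonneg _), Real.rpow_two]
  ring

lemma abs_integral_fourProduct_sub_le_mul_integral_abs_one (hmeas : ∀ i, Measurable (Y i))
    (hstat : Stationary Y) (hbdd : ∀ n ω, |Y n ω| ≤ K) (i j k : ℕ) :
    |∫ ω, Y 1 ω * Y (i + 1) ω * Y (i + j + 1) ω * Y (i + j + k + 1) ω ∂ℙ
      - (∫ ω, Y 1 ω * Y (i + 1) ω ∂ℙ) * ∫ ω, Y (i + j + 1) ω * Y (i + j + k + 1) ω ∂ℙ|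
      ≤ 2 * K ^ 3 * ∫ ω, |Y 1 ω| ∂ℙ := by
  have hE := abs_integral_fourProduct_le_mul_integral_abs_one hmeas hstat hbdd 1 (i + 1)
    (i + j + 1) (i + j + k + 1)
  have hP₁ := abs_integral_mul_le_mul_integral_abs_one hmeas hstat hbdd 1 (i + 1)
  have hP₂ : |∫ ω, Y (i + j + 1) ω * Y (i + j + k + 1) ω ∂ℙ| ≤ K * K := by
    simpa using norm_integral_le_of_norm_le_const (μ := ℙ)
      (f := fun ω => Y (i + j + 1) ω * Y (i + j + k + 1) ω) (ae_of_all _ fun ω =>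
        abs_mul_le_of_abs_le_of_abs_le (hbdd (i + j + 1) ω) (hbdd (i + j + k + 1) ω))
  refine (abs_sub _ _).trans ?_
  linarith [abs_mul_le_of_abs_le_of_abs_le hP₁ hP₂,
    show K * (∫ ω, |Y 1 ω| ∂ℙ) * (K * K) = K ^ 3 * ∫ ω, |Y 1 ω| ∂ℙ by ring]

lemma exists_abs_le_and_abs_fourth_moment_sub_le (hmeas : ∀ i, Measurable (Y i))
    (hstat : Stationary Y) (hbdd : ∀ n ω, |Y n ω| ≤ K) (hcent : ∀ n, ∫ ω, Y n ω ∂ℙ = 0)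
    {θ : ℝ} (hθ₀ : 0 ≤ θ) (hθ₁ : θ ≤ 1) (i j k : ℕ) :
    ∃ R : ℝ, |R| ≤ ((4 * K ^ 2) ^ θ * K ^ (1 - θ)) ^ 2
        * (alphaMix Y i ^ θ * alphaMix Y k ^ θ * (∫ ω, |Y 1 ω| ∂ℙ) ^ (2 * (1 - θ)))
      ∧ |∫ ω, Y 1 ω * Y (i + 1) ω * Y (i + j + 1) ω * Y (i + j + k + 1) ω ∂ℙ - R|
        ≤ 4 * K ^ 4 * alphaMix Y (max i (max j k))
      ∧ |∫ ω, Y 1 ω * Y (i + 1) ω * Y (i + j + 1) ω * Y (i + j + k + 1) ω ∂ℙ - R|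
        ≤ 2 * K ^ 3 * ∫ ω, |Y 1 ω| ∂ℙ := by
  have hR₀ := (abs_nonneg _).trans
    (abs_integral_mul_mul_integral_mul_le hmeas hstat hbdd hcent hθ₀ hθ₁ i j k)
  have hE : |∫ ω, Y 1 ω * Y (i + 1) ω * Y (i + j + 1) ω * Y (i + j + k + 1) ω ∂ℙ - 0|
      ≤ 2 * K ^ 3 * ∫ ω, |Y 1 ω| ∂ℙ := by
    have hK := nonneg_of_forall_abs_le hbdd
    have hm : 0 ≤ ∫ ω, |Y 1 ω| ∂ℙ := integral_nonneg fun _ => abs_nonneg _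
    rw [sub_zero]
    refine (abs_integral_fourProduct_le_mul_integral_abs_one hmeas hstat hbdd 1 (i + 1)
      (i + j + 1) (i + j + k + 1)).trans ?_
    have : 0 ≤ K ^ 3 * ∫ ω, |Y 1 ω| ∂ℙ := by positivity
    linarith
  rcases max_choice i (max j k) with hmax | hmax
  · rw [hmax]
    exact ⟨0, by simpa using hR₀,
      by simpa using abs_integral_fourProduct_le_alphaMix_left hmeas hbdd hcent i j k, hE⟩
  rcases max_choice j k with hmax' | hmax' <;> rw [hmax, hmax']
  · exact ⟨_, abs_integral_mul_mul_integral_mul_le hmeas hstat hbdd hcent hθ₀ hθ₁ i j k,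
      abs_integral_fourProduct_sub_le_alphaMix_middle hmeas hbdd i j k,
      abs_integral_fourProduct_sub_le_mul_integral_abs_one hmeas hstat hbdd i j k⟩
  · exact ⟨0, by simpa using hR₀,
      by simpa using abs_integral_fourProduct_le_alphaMix_right hmeas hbdd hcent i j k, hE⟩

end BoundedCenteredProcess

theorem fourth_covariance_bound_strong_mixing_general
    {Ω : Type*} [MeasureSpace Ω] [IsProbabilityMeasure (ℙ : Measure Ω)]
    (Y : ℕ → Ω → ℝ) (hmeas : ∀ i, Measurable (Y i)) (hstat : Stationary Y)
    (K : ℝ) (hbdd : ∀ n ω, |Y n ω| ≤ K)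
    (hcent : ∀ n, ∫ ω, Y n ω ∂ℙ = 0)
    (β : ℝ) (hβ : 3 < β) :
    ∃ C : ℝ, 0 < C ∧ ∀ i j k : ℕ, 1 ≤ i → 1 ≤ j → 1 ≤ k →
      |∫ ω, Y 0 ω * Y i ω * Y (i + j) ω * Y (i + j + k) ω ∂ℙ|
        ≤ C * (alphaMix Y i) ^ ((1 : ℝ) / β) * (alphaMix Y k) ^ ((1 : ℝ) / β)
            * (∫ ω, |Y 1 ω| ∂ℙ) ^ ((2 * β - 2) / β)
          + C * (alphaMix Y (max i (max j k))) ^ ((3 : ℝ) / β)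
            * (∫ ω, |Y 1 ω| ∂ℙ) ^ ((β - 3) / β) := by
  have hK : 0 ≤ K := nonneg_of_forall_abs_le hbdd
  have hβ₀ : 0 < β := by linarith
  have hθ₁ : 1 / β ≤ 1 := (div_le_one hβ₀).mpr (by linarith)
  have hθ₃ : 3 / β ≤ 1 := (div_le_one hβ₀).mpr hβ.le
  set A₁ := ((4 * K ^ 2) ^ (1 / β) * K ^ (1 - 1 / β)) ^ 2
  set A₂ := (4 * K ^ 4) ^ (3 / β) * (2 * K ^ 3) ^ (1 - 3 / β)
  have hA₁ : 0 ≤ A₁ := by positivity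
  have hA₂ : 0 ≤ A₂ := by positivity
  refine ⟨A₁ + A₂ + 1, by positivity, fun i j k _ _ _ => ?_⟩
  obtain ⟨R, hR, hmix, hL1⟩ := exists_abs_le_and_abs_fourth_moment_sub_le hmeas hstat hbdd hcent
    (by positivity : 0 ≤ 1 / β) hθ₁ i j k
  have hmain := abs_le_mul_rpow_mul_rpow_of_le_of_le (by positivity) (by positivity)
    (alphaMix_nonneg Y _) (integral_nonneg fun _ => abs_nonneg _) hmix hL1
    (by positivity : 0 ≤ 3 / β) hθ₃
  -- The σ-algebras of `alphaMix` only involve indices `≥ 1`, so `Y 0` is shifted away.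
  rw [show (2 * β - 2) / β = 2 * (1 - 1 / β) by field_simp,
    show (β - 3) / β = 1 - 3 / β by field_simp,
    hstat.integral_fourProduct_eq_shift_one hmeas]
  set E := ∫ ω, Y 1 ω * Y (i + 1) ω * Y (i + j + 1) ω * Y (i + j + k + 1) ω ∂ℙ
  set T₁ := alphaMix Y i ^ (1 / β) * alphaMix Y k ^ (1 / β)
    * (∫ ω, |Y 1 ω| ∂ℙ) ^ (2 * (1 - 1 / β))
  set T₂ := alphaMix Y (max i (max j k)) ^ (3 / β) * (∫ ω, |Y 1 ω| ∂ℙ) ^ (1 - 3 / β)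
  have hT₁ : 0 ≤ T₁ := by have := alphaMix_nonneg Y i; have := alphaMix_nonneg Y k; positivity
  have hT₂ : 0 ≤ T₂ := by have := alphaMix_nonneg Y (max i (max j k)); positivity
  calc |E| ≤ |R| + |E - R| := by linarith [abs_sub_abs_le_abs_sub E R]
    _ ≤ A₁ * T₁ + A₂ * T₂ := add_le_add hR hmain
    _ ≤ (A₁ + A₂ + 1) * T₁ + (A₁ + A₂ + 1) * T₂ := by gcongr <;> linarith
    _ = _ := by ring

/-- Fourth-order covariance bound for stationary, bounded, centered random
variables from a strongly mixing sequence with `α(n) = O(n^{−β})`, `β > 3`. -/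
theorem fourth_covariance_bound_strong_mixing
    {Ω : Type*} [MeasureSpace Ω] [IsProbabilityMeasure (ℙ : Measure Ω)]
    (Y : ℕ → Ω → ℝ) (hmeas : ∀ i, Measurable (Y i)) (hstat : Stationary Y)
    (K : ℝ) (hbdd : ∀ n ω, |Y n ω| ≤ K)
    (hcent : ∀ n, ∫ ω, Y n ω ∂ℙ = 0)
    (β : ℝ) (hβ : 3 < β)
    (hmix : (fun n => alphaMix Y n) =O[atTop] fun n : ℕ => (n : ℝ) ^ (-β)) :
    ∃ C : ℝ, 0 < C ∧ ∀ i j k : ℕ, 1 ≤ i → 1 ≤ j → 1 ≤ k →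
      |∫ ω, Y 0 ω * Y i ω * Y (i + j) ω * Y (i + j + k) ω ∂ℙ|
        ≤ C * (alphaMix Y i) ^ ((1 : ℝ) / β) * (alphaMix Y k) ^ ((1 : ℝ) / β)
            * (∫ ω, |Y 1 ω| ∂ℙ) ^ ((2 * β - 2) / β)
          + C * (alphaMix Y (max i (max j k))) ^ ((3 : ℝ) / β)
            * (∫ ω, |Y 1 ω| ∂ℙ) ^ ((β - 3) / β) :=
  fourth_covariance_bound_strong_mixing_general Y hmeas hstat K hbdd hcent β hβ
end
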